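/- Let q be an odd integer with 0 < q < m. Then for every t ∈ V_m, ξ⁺_q(t)·(ξ⁻_1(t) − ξ⁻_1(q)) = ξ⁺_{q+1}(t) + q·ξ⁻_{q+1}(t) in R, where ξ⁻_1(q) ∈ R is the value of ξ⁻_1 at the vertex q. -/

import Mathlib

/-!
On each vertex `t` every class is a binomial coefficient times a product of consecutive linear
forms `∓α + kδ`, whose position is governed by a ceiling of `(±t - q)/2`; so on each of the four
progressions `t = q + 2k`, `q + 2k + 1`, `-q - 2k - 1`, `-q - 2k - 2` all classes are explicit.
For odd `q = 2e + 1` the vertex `q` gives `ξ⁻_1(q) = e(-α + eδ)`, and `ξ⁻_1(t) - ξ⁻_1(q)`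
factors as an integer times one linear form. After splitting off the factors by which the
products of level `q` and `q + 1` differ, both sides are the same product times a linear form,
and the coefficients agree by Pascal's rule and the absorption identity
`(q + 1)·C(n, q + 1) = (n - q)·C(n, q)`.
-/

noncomputable section

open Finset MvPolynomial

/-- The coefficient ring `R = ℚ[α,δ]`, realized as polynomials in two variables. -/
abbrev Rpoly : Type := MvPolynomial (Fin 2) ℚ

/-- The variable `α`. -/
def va : Rpoly := X 0

/-- The variable `δ`. -/
def vd : Rpoly := X 1

/-- `P⁻(a,b) = ∏_{k=a}^{b} (−α + k·δ)`. -/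
def Pneg (a b : ℤ) : Rpoly :=
  ∏ k ∈ Finset.Icc a b, (-va + MvPolynomial.C (k : ℚ) * vd)

/-- `P⁺(a,b) = ∏_{k=a}^{b} (α + k·δ)`. -/
def Ppos (a b : ℤ) : Rpoly :=
  ∏ k ∈ Finset.Icc a b, (va + MvPolynomial.C (k : ℚ) * vd)

/-- Binomial coefficient `C(n,q)` (all uses have `n ≥ 0`). -/
def B (n : ℤ) (q : ℕ) : ℚ := (n.toNat).choose q

/-- The Knutson–Tao class `ξ⁺_q = ξ(m+q, m−q)`, as a function on vertices `t`
(the vertex `t` encodes the pair `(m+t, m−t)`). -/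
def xiP (m : ℤ) (q : ℕ) (t : ℤ) : Rpoly :=
  if (q : ℤ) ≤ t ∧ t ≤ m then
    MvPolynomial.C (B (⌈((t : ℚ) - (q : ℚ) + 1) / 2⌉ + q - 1) q) *
      Pneg (⌈((t : ℚ) - (q : ℚ) + 1) / 2⌉ - 1) (⌈((t : ℚ) - (q : ℚ) + 1) / 2⌉ + q - 2)
  else if -m ≤ t ∧ t ≤ -((q : ℤ) + 1) then
    MvPolynomial.C (B (⌈(-(t : ℚ) - (q : ℚ)) / 2⌉ + q - 1) q) *
      Ppos (⌈(-(t : ℚ) - (q : ℚ)) / 2⌉ + 1) (⌈(-(t : ℚ) - (q : ℚ)) / 2⌉ + q)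
  else 0

/-- The Knutson–Tao class `ξ⁻_q = ξ(m−q, m+q)`. -/
def xiM (m : ℤ) (q : ℕ) (t : ℤ) : Rpoly :=
  if (q : ℤ) + 1 ≤ t ∧ t ≤ m then
    MvPolynomial.C (B (⌈((t : ℚ) - (q : ℚ)) / 2⌉ + q - 1) q) *
      Pneg (⌈((t : ℚ) - (q : ℚ)) / 2⌉) (⌈((t : ℚ) - (q : ℚ)) / 2⌉ + q - 1)
  else if -m ≤ t ∧ t ≤ -(q : ℤ) then
    MvPolynomial.C (B (⌈(-(t : ℚ) - (q : ℚ) + 1) / 2⌉ + q - 1) q) *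
      Ppos (⌈(-(t : ℚ) - (q : ℚ) + 1) / 2⌉) (⌈(-(t : ℚ) - (q : ℚ) + 1) / 2⌉ + q - 1)
  else 0

/-- The weight of the vertex `t`: `w(t) = ((1−2t)/2)·α + (t(t−1)/2)·δ`. -/
def w (t : ℤ) : Rpoly :=
  MvPolynomial.C ((1 - 2 * (t : ℚ)) / 2) * va +
    MvPolynomial.C (((t : ℚ) * ((t : ℚ) - 1)) / 2) * vd

lemma ceil_div_two_eq {x : ℚ} {z c : ℤ} (hx : x = z) (h₁ : z ≤ 2 * c)
    (h₂ : 2 * c < z + 2) : ⌈x / 2⌉ = c := by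
  subst hx
  have h₁' : (z : ℚ) ≤ 2 * c := by exact_mod_cast h₁
  have h₂' : (2 * c : ℚ) < z + 2 := by exact_mod_cast h₂
  rw [Int.ceil_eq_iff]
  constructor <;> linarith

lemma B_eq {z : ℤ} {n : ℕ} (h : z = n) (q : ℕ) : B z q = n.choose q := by
  simp [B, h]

section Products

variable {a a' b b' : ℤ}

lemma Pneg_eq_mul_Pneg (ha : a' = a + 1) (h : a ≤ b) :
    Pneg a b = (-va + (a : Rpoly) * vd) * Pneg a' b := by
  rw [Pneg, Pneg, ← insert_Icc_add_one_left_eq_Icc h, prod_insert (by simp), ha, map_intCast]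

lemma Pneg_eq_Pneg_mul (hb : b' = b - 1) (h : a ≤ b) :
    Pneg a b = Pneg a b' * (-va + (b : Rpoly) * vd) := by
  rw [Pneg, Pneg, ← insert_Icc_sub_one_right_eq_Icc h, prod_insert (by simp), hb, map_intCast,
    mul_comm]

lemma Ppos_eq_mul_Ppos (ha : a' = a + 1) (h : a ≤ b) :
    Ppos a b = (va + (a : Rpoly) * vd) * Ppos a' b := by
  rw [Ppos, Ppos, ← insert_Icc_add_one_left_eq_Icc h, prod_insert (by simp), ha, map_intCast]

lemma Ppos_eq_Ppos_mul (hb : b' = b - 1) (h : a ≤ b) :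
    Ppos a b = Ppos a b' * (va + (b : Rpoly) * vd) := by
  rw [Ppos, Ppos, ← insert_Icc_sub_one_right_eq_Icc h, prod_insert (by simp), hb, map_intCast,
    mul_comm]

lemma Pneg_self (a : ℤ) : Pneg a a = -va + (a : Rpoly) * vd := by
  rw [Pneg, Icc_self, prod_singleton, map_intCast]

lemma Ppos_self (a : ℤ) : Ppos a a = va + (a : Rpoly) * vd := by
  rw [Ppos, Icc_self, prod_singleton, map_intCast]

end Products

section ClosedForms

variable {m t : ℤ} {q c n : ℕ} {a b : ℤ}

lemma xiP_eq_zero (h₁ : -((q : ℤ) + 1) < t) (h₂ : t < q) : xiP m q t = 0 := by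
  rw [xiP, if_neg (by omega), if_neg (by omega)]

lemma xiM_eq_zero (h₁ : -(q : ℤ) < t) (h₂ : t < q + 1) : xiM m q t = 0 := by
  rw [xiM, if_neg (by omega), if_neg (by omega)]

/- In the closed forms `c` is the ceiling occurring in the definition; `c = 0` puts `t` outside
the support, where `n < q` makes the binomial coefficient vanish too. The parameters `n`, `a`, `b`
come with their defining equations so that callers may write them in any form. -/
lemma xiP_eq_of_le (h₁ : t ≤ q - 1 + 2 * c) (h₂ : q - 1 + 2 * c ≤ t + 1) (htm : t ≤ m)
    (hn : n + 1 = c + q) (ha : a = c - 1) (hb : b = c + q - 2) :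
    xiP m q t = n.choose q * Pneg a b := by
  subst ha hb
  rcases Nat.eq_zero_or_pos c with rfl | hc
  · rw [xiP_eq_zero (by omega) (by omega), Nat.choose_eq_zero_of_lt (by omega), Nat.cast_zero,
      zero_mul]
  · rw [xiP, if_pos ⟨by omega, htm⟩,
      ceil_div_two_eq (z := t - q + 1) (c := c) (by push_cast; ring) (by omega) (by omega),
      B_eq (n := n) (by omega), map_natCast]

lemma xiM_eq_of_le (h₁ : t ≤ q + 2 * c) (h₂ : q + 2 * c ≤ t + 1) (htm : t ≤ m)
    (hn : n + 1 = c + q) (ha : a = c) (hb : b = c + q - 1) :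
    xiM m q t = n.choose q * Pneg a b := by
  subst ha hb
  rcases Nat.eq_zero_or_pos c with rfl | hc
  · rw [xiM_eq_zero (by omega) (by omega), Nat.choose_eq_zero_of_lt (by omega), Nat.cast_zero,
      zero_mul]
  · rw [xiM, if_pos ⟨by omega, htm⟩,
      ceil_div_two_eq (z := t - q) (c := c) (by push_cast; ring) (by omega) (by omega),
      B_eq (n := n) (by omega), map_natCast]

lemma xiP_eq_of_ge (h₁ : -(q + 2 * c : ℤ) ≤ t) (h₂ : t ≤ -(q + 2 * c : ℤ) + 1)
    (hmt : -m ≤ t) (hn : n + 1 = c + q) (ha : a = c + 1) (hb : b = c + q) :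
    xiP m q t = n.choose q * Ppos a b := by
  subst ha hb
  rcases Nat.eq_zero_or_pos c with rfl | hc
  · rw [xiP_eq_zero (by omega) (by omega), Nat.choose_eq_zero_of_lt (by omega), Nat.cast_zero,
      zero_mul]
  · rw [xiP, if_neg (by omega), if_pos ⟨hmt, by omega⟩,
      ceil_div_two_eq (z := -t - q) (c := c) (by push_cast; ring) (by omega) (by omega),
      B_eq (n := n) (by omega), map_natCast]

lemma xiM_eq_of_ge (h₁ : -(q - 1 + 2 * c : ℤ) ≤ t) (h₂ : t ≤ -(q - 1 + 2 * c : ℤ) + 1)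
    (hmt : -m ≤ t) (hn : n + 1 = c + q) (ha : a = c) (hb : b = c + q - 1) :
    xiM m q t = n.choose q * Ppos a b := by
  subst ha hb
  rcases Nat.eq_zero_or_pos c with rfl | hc
  · rw [xiM_eq_zero (by omega) (by omega), Nat.choose_eq_zero_of_lt (by omega), Nat.cast_zero,
      zero_mul]
  · rw [xiM, if_neg (by omega), if_pos ⟨hmt, by omega⟩,
      ceil_div_two_eq (z := -t - q + 1) (c := c) (by push_cast; ring) (by omega) (by omega),
      B_eq (n := n) (by omega), map_natCast]

lemma xiM_one_eq_of_le (h₁ : t ≤ 1 + 2 * c) (h₂ : 1 + 2 * c ≤ t + 1) (htm : t ≤ m) :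
    xiM m 1 t = c * (-va + c * vd) := by
  rw [xiM_eq_of_le (n := c) (a := c) (b := c) h₁ h₂ htm rfl rfl (by simp), Pneg_self]
  simp

lemma xiM_one_eq_of_ge (h₁ : -(2 * c : ℤ) ≤ t) (h₂ : t ≤ -(2 * c : ℤ) + 1)
    (hmt : -m ≤ t) : xiM m 1 t = c * (va + c * vd) := by
  rw [xiM_eq_of_ge (n := c) (a := c) (b := c) (by omega) (by omega) hmt rfl rfl (by simp),
    Ppos_self]
  simp

end ClosedForms

lemma add_choose_succ_mul_succ (k q : ℕ) :
    (k + q).choose (q + 1) * (q + 1) = (k + q).choose q * k := by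
  rw [Nat.choose_succ_right_eq, Nat.add_sub_cancel]

section Pieri

variable {m t : ℤ} {q k : ℕ}

lemma pieri_of_eq_add_two_mul (hq : Odd q) (ht : t = q + 2 * k) (htm : t ≤ m) :
    xiP m q t * (xiM m 1 t - xiM m 1 q) = xiP m (q + 1) t + q * xiM m (q + 1) t := by
  have hdiff : xiM m 1 t - xiM m 1 q = k * (-va + (k + q - 1) * vd) := by
    obtain ⟨e, rfl⟩ := hq
    rw [xiM_one_eq_of_le (c := e + k) (by omega) (by omega) htm,
      xiM_one_eq_of_le (c := e) (by omega) (by omega) (by omega)]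
    push_cast
    ring
  have hP : xiP m q t = (k + q).choose q * Pneg k (k + q - 1) :=
    xiP_eq_of_le (c := k + 1) (by omega) (by omega) htm (by omega) (by omega) (by omega)
  have hP' : xiP m (q + 1) t = (k + q).choose (q + 1) * Pneg (k - 1) (k + q - 1) :=
    xiP_eq_of_le (c := k) (by omega) (by omega) htm (by omega) (by omega) (by omega)
  have hM' : xiM m (q + 1) t = (k + q).choose (q + 1) * Pneg k (k + q) :=
    xiM_eq_of_le (c := k) (by omega) (by omega) htm (by omega) (by omega) (by omega)
  have hsplit₁ :
      Pneg (k - 1) (k + q - 1) = (-va + ((k - 1 : ℤ) : Rpoly) * vd) * Pneg k (k + q - 1) :=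
    Pneg_eq_mul_Pneg (by ring) (by omega)
  have hsplit₂ : Pneg k (k + q) = Pneg k (k + q - 1) * (-va + ((k + q : ℤ) : Rpoly) * vd) :=
    Pneg_eq_Pneg_mul rfl (by omega)
  have hbin : ((k + q).choose (q + 1) * (q + 1) : Rpoly) = (k + q).choose q * k := by
    exact_mod_cast add_choose_succ_mul_succ k q
  rw [hdiff, hP, hP', hM', hsplit₁, hsplit₂]
  push_cast
  linear_combination (-(Pneg k (k + q - 1) * (-va + (k + q - 1) * vd))) * hbin

lemma pieri_of_eq_add_two_mul_add_one (hq : Odd q) (ht : t = q + 2 * k + 1) (htm : t ≤ m) :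
    xiP m q t * (xiM m 1 t - xiM m 1 q) = xiP m (q + 1) t + q * xiM m (q + 1) t := by
  have hdiff : xiM m 1 t - xiM m 1 q = (k + 1) * (-va + (k + q) * vd) := by
    obtain ⟨e, rfl⟩ := hq
    rw [xiM_one_eq_of_le (c := e + k + 1) (by omega) (by omega) htm,
      xiM_one_eq_of_le (c := e) (by omega) (by omega) (by omega)]
    push_cast
    ring
  have hP : xiP m q t = (k + q).choose q * Pneg k (k + q - 1) :=
    xiP_eq_of_le (c := k + 1) (by omega) (by omega) htm (by omega) (by omega) (by omega)
  have hP' : xiP m (q + 1) t = (k + q + 1).choose (q + 1) * Pneg k (k + q) :=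
    xiP_eq_of_le (c := k + 1) (by omega) (by omega) htm (by omega) (by omega) (by omega)
  have hM' : xiM m (q + 1) t = (k + q).choose (q + 1) * Pneg k (k + q) :=
    xiM_eq_of_le (c := k) (by omega) (by omega) htm (by omega) (by omega) (by omega)
  have hsplit : Pneg k (k + q) = Pneg k (k + q - 1) * (-va + ((k + q : ℤ) : Rpoly) * vd) :=
    Pneg_eq_Pneg_mul rfl (by omega)
  have hpascal :
      ((k + q + 1).choose (q + 1) : Rpoly) = (k + q).choose q + (k + q).choose (q + 1) := by
    exact_mod_cast Nat.choose_succ_succ' (k + q) q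
  have hbin : ((k + q).choose (q + 1) * (q + 1) : Rpoly) = (k + q).choose q * k := by
    exact_mod_cast add_choose_succ_mul_succ k q
  rw [hdiff, hP, hP', hM', hsplit]
  push_cast
  linear_combination (-(Pneg k (k + q - 1) * (-va + (k + q) * vd))) * (hpascal + hbin)

lemma pieri_of_eq_neg_sub_two_mul_sub_one (hq : Odd q) (ht : t = -q - 2 * k - 1) (hmt : -m ≤ t) :
    xiP m q t * (xiM m 1 t - xiM m 1 q) = xiP m (q + 1) t + q * xiM m (q + 1) t := by
  have hdiff : xiM m 1 t - xiM m 1 q = (q + k) * (va + (k + 1) * vd) := by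
    obtain ⟨e, rfl⟩ := hq
    rw [xiM_one_eq_of_ge (c := e + k + 1) (by omega) (by omega) hmt,
      xiM_one_eq_of_le (c := e) (by omega) (by omega) (by omega)]
    push_cast
    ring
  have hP : xiP m q t = (k + q).choose q * Ppos (k + 2) (k + q + 1) :=
    xiP_eq_of_ge (c := k + 1) (by omega) (by omega) hmt (by omega) (by omega) (by omega)
  have hP' : xiP m (q + 1) t = (k + q).choose (q + 1) * Ppos (k + 1) (k + q + 1) :=
    xiP_eq_of_ge (c := k) (by omega) (by omega) hmt (by omega) (by omega) (by omega)
  have hM' : xiM m (q + 1) t = (k + q + 1).choose (q + 1) * Ppos (k + 1) (k + q + 1) :=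
    xiM_eq_of_ge (c := k + 1) (by omega) (by omega) hmt (by omega) (by omega) (by omega)
  have hsplit :
      Ppos (k + 1) (k + q + 1) = (va + ((k + 1 : ℤ) : Rpoly) * vd) * Ppos (k + 2) (k + q + 1) :=
    Ppos_eq_mul_Ppos (by ring) (by omega)
  have hpascal :
      ((k + q + 1).choose (q + 1) : Rpoly) = (k + q).choose q + (k + q).choose (q + 1) := by
    exact_mod_cast Nat.choose_succ_succ' (k + q) q
  have hbin : ((k + q).choose (q + 1) * (q + 1) : Rpoly) = (k + q).choose q * k := by
    exact_mod_cast add_choose_succ_mul_succ k q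
  rw [hdiff, hP, hP', hM', hsplit]
  push_cast
  linear_combination (-(Ppos (k + 2) (k + q + 1) * (va + (k + 1) * vd))) * (q * hpascal + hbin)

lemma pieri_of_eq_neg_sub_two_mul_sub_two (hq : Odd q) (ht : t = -q - 2 * k - 2) (hmt : -m ≤ t) :
    xiP m q t * (xiM m 1 t - xiM m 1 q) = xiP m (q + 1) t + q * xiM m (q + 1) t := by
  have hdiff : xiM m 1 t - xiM m 1 q = (q + k + 1) * (va + (k + 2) * vd) := by
    obtain ⟨e, rfl⟩ := hq
    rw [xiM_one_eq_of_ge (c := e + k + 2) (by omega) (by omega) hmt,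
      xiM_one_eq_of_le (c := e) (by omega) (by omega) (by omega)]
    push_cast
    ring
  have hP : xiP m q t = (k + q).choose q * Ppos (k + 2) (k + q + 1) :=
    xiP_eq_of_ge (c := k + 1) (by omega) (by omega) hmt (by omega) (by omega) (by omega)
  have hP' : xiP m (q + 1) t = (k + q + 1).choose (q + 1) * Ppos (k + 2) (k + q + 2) :=
    xiP_eq_of_ge (c := k + 1) (by omega) (by omega) hmt (by omega) (by omega) (by omega)
  have hM' : xiM m (q + 1) t = (k + q + 1).choose (q + 1) * Ppos (k + 1) (k + q + 1) :=
    xiM_eq_of_ge (c := k + 1) (by omega) (by omega) hmt (by omega) (by omega) (by omega)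
  have hsplit₁ : Ppos (k + 2) (k + q + 2) =
      Ppos (k + 2) (k + q + 1) * (va + ((k + q + 2 : ℤ) : Rpoly) * vd) :=
    Ppos_eq_Ppos_mul (by ring) (by omega)
  have hsplit₂ :
      Ppos (k + 1) (k + q + 1) = (va + ((k + 1 : ℤ) : Rpoly) * vd) * Ppos (k + 2) (k + q + 1) :=
    Ppos_eq_mul_Ppos (by ring) (by omega)
  have hbin : ((k + q + 1) * (k + q).choose q : Rpoly) = (k + q + 1).choose (q + 1) * (q + 1) := by
    exact_mod_cast Nat.add_one_mul_choose_eq (k + q) q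
  rw [hdiff, hP, hP', hM', hsplit₁, hsplit₂]
  push_cast
  linear_combination (Ppos (k + 2) (k + q + 1) * (va + (k + 2) * vd)) * hbin

end Pieri

theorem statement10_general (m : ℕ) (q : ℕ) (hodd : Odd q)
    (t : ℤ) (ht1 : -(m : ℤ) ≤ t) (ht2 : t ≤ (m : ℤ)) :
    xiP m q t * (xiM m 1 t - xiM m 1 (q : ℤ)) =
      xiP m (q + 1) t + (q : Rpoly) * xiM m (q + 1) t := by
  rcases le_or_gt (q : ℤ) t with hqt | htq
  · obtain ⟨k, ht | ht⟩ : ∃ k : ℕ, t = q + 2 * k ∨ t = q + 2 * k + 1 :=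
      ⟨((t - q) / 2).toNat, by omega⟩
    exacts [pieri_of_eq_add_two_mul hodd ht ht2, pieri_of_eq_add_two_mul_add_one hodd ht ht2]
  rcases le_or_gt t (-(q + 1 : ℤ)) with htq' | htq'
  · obtain ⟨k, ht | ht⟩ : ∃ k : ℕ, t = -q - 2 * k - 1 ∨ t = -q - 2 * k - 2 :=
      ⟨((-t - q - 1) / 2).toNat, by omega⟩
    exacts [pieri_of_eq_neg_sub_two_mul_sub_one hodd ht ht1,
      pieri_of_eq_neg_sub_two_mul_sub_two hodd ht ht1]
  rw [xiP_eq_zero (by omega) htq, xiP_eq_zero (q := q + 1) (by omega) (by omega),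
    xiM_eq_zero (q := q + 1) (by omega) (by omega)]
  simp

/-- for odd `0 < q < m`,
`ξ⁺_q · (ξ⁻_1 − ξ⁻_1(q)) = ξ⁺_{q+1} + q·ξ⁻_{q+1}` pointwise on `V_m`. -/
theorem statement10 (m : ℕ) (hm : 1 ≤ m) (q : ℕ) (hodd : Odd q)
    (hq0 : 0 < q) (hqm : q < m)
    (t : ℤ) (ht1 : -(m : ℤ) ≤ t) (ht2 : t ≤ (m : ℤ)) :
    xiP m q t * (xiM m 1 t - xiM m 1 (q : ℤ)) =
      xiP m (q + 1) t + (q : Rpoly) * xiM m (q + 1) t :=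
  statement10_general m q hodd t ht1 ht2
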